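/- Let h be a hyperexponential term given in standard form h = c0·exp(a/b)·∏_{ℓ=1}^L c_ℓ^{e_ℓ} with deg_x a > deg_x b. Then for every integer i ≥ 0 there exists a polynomial N_i ∈ K[x,y] such that (D_x^i h)·c0·(b·b*·∏_{ℓ=1}^L c_ℓ)^i = N_i·h in E, and N_i satisfies: (1) deg_x N_i = deg_x c0 + i·(deg_x a + deg_x b* + Σ_{ℓ=1}^L deg_x c_ℓ − 1); (2) deg_y N_i ≤ deg_y c0 + i·(max{deg_y a, deg_y b} + deg_y b* + Σ_{ℓ=1}^L deg_y c_ℓ); (3) lc_x N_i = (lc_x c0)·(lc_x(a·b*·∏_{ℓ=1}^L c_ℓ))^i·(deg_x a − deg_x b)^i, where the integer deg_x a − deg_x b is interpreted as an element of K. -/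

import Mathlib

open Polynomial Finset

/-- The derivative with respect to `y` on `K[y][x]`
(we represent bivariate polynomials as `Polynomial (Polynomial K)`,
the *outer* variable being `x`, the *inner* variable being `y`). -/
noncomputable def DY {K : Type*} [CommRing K] (p : Polynomial (Polynomial K)) :
    Polynomial (Polynomial K) :=
  p.sum fun n a => Polynomial.C (Polynomial.derivative a) * Polynomial.X ^ n

/-- The degree with respect to `y` of an element of `K[y][x]`. -/
noncomputable def degY {K : Type*} [CommRing K] (p : Polynomial (Polynomial K)) : ℕ :=
  p.support.sup fun n => (p.coeff n).natDegree

/-- The embedding of `K[x]` into `K[y][x]` (polynomials free of `y`). -/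
noncomputable def liftX {K : Type*} [CommRing K] (p : Polynomial K) :
    Polynomial (Polynomial K) :=
  p.map (Polynomial.C : K →+* Polynomial K)

/-- The falling factorial `z(z-1)⋯(z-n+1)` of an element of `K`. -/
noncomputable def ffall {K : Type*} [Field K] (z : K) (n : ℕ) : K :=
  ∏ j ∈ Finset.range n, (z - (j : K))

/-!
Put `M = b b* ∏ c_ℓ`. Every prime factor of `b` divides `b*`, so `b ∣ b' b*`, and the hypothesis on
`D_x h / h` becomes `D_x h · c0 M = (c0' M + c0 T) h` for a polynomial `T` with
`b T = (a' b - a b') b* ∏ c_ℓ + b² b* S`, where `S / ∏ c_ℓ = Σ e_ℓ c_ℓ' / c_ℓ`.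
Differentiating `D_x^i h · c0 M^i = N_i h` gives `N_{i+1} = N_i' M + N_i (T - i M')`.
Since `deg_x a > deg_x b`, the term `a' b - a b'` has degree `deg a + deg b - 1` and leading
coefficient `(deg a - deg b) lc a lc b`, and `deg S < Σ deg c_ℓ`; hence `T` has degree
`deg a - 1 + deg b* + Σ deg c_ℓ ≥ deg M` and leading coefficient `(deg a - deg b) lc(a b* ∏ c_ℓ)`.
So `N_i (T - i M')` strictly dominates `N_i' M`, and degree and leading coefficient of `N_i`
follow by induction; the bound on `deg_y` is read off the same recursion.
-/

/-- The numerator of `∑ ℓ, e ℓ • (c ℓ)' / c ℓ` over the denominator `∏ ℓ, c ℓ`. -/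
noncomputable def logDerivNumerator {ι S A : Type*} [Fintype ι] [DecidableEq ι] [CommRing A]
    [SMulZeroClass S A] (e : ι → S) (c : ι → A[X]) : A[X] :=
  ∑ ℓ, e ℓ • (derivative (c ℓ) * ∏ j ∈ univ.erase ℓ, c j)

/-- The numerators `N i` of the paper, for `T = M * D (h / c₀) / (h / c₀)`. -/
noncomputable def derivNumerator {A : Type*} [CommRing A] (c₀ M T : A[X]) : ℕ → A[X]
  | 0 => c₀
  | i + 1 => derivative (derivNumerator c₀ M T i) * M +
      derivNumerator c₀ M T i * (T - i • derivative M)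

lemma dvd_derivative_mul_of_forall_prime_dvd {R : Type*} [CommRing R] [IsDomain R]
    [UniqueFactorizationMonoid R] {b s : R[X]} (h : ∀ q : R[X], Prime q → q ∣ b → q ∣ s) :
    b ∣ derivative b * s := by
  induction b using UniqueFactorizationMonoid.induction_on_prime with
  | h₁ => simp
  | h₂ u hu => exact hu.dvd
  | h₃ a p ha hp ih =>
    obtain ⟨u, hu⟩ := h p hp (dvd_mul_right p a)
    obtain ⟨v, hv⟩ := ih fun q hq hqa => h q hq (hqa.mul_left p)
    refine ⟨derivative p * u + v, ?_⟩
    rw [derivative_mul]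
    linear_combination (derivative p * a) * hu + p * hv

section Degree

variable {A : Type*} [CommRing A]

lemma coeff_derivative_natDegree_sub_one (p : A[X]) :
    (derivative p).coeff (p.natDegree - 1) = p.leadingCoeff * p.natDegree := by
  rcases Nat.eq_zero_or_pos p.natDegree with hp | hp
  · simp [derivative_of_natDegree_zero hp, hp]
  · rw [coeff_derivative, ← Nat.cast_succ, Nat.succ_eq_add_one, Nat.sub_add_cancel hp,
      leadingCoeff]

lemma degree_derivative_lt_of_natDegree_le {p q : A[X]} (hq : q ≠ 0)
    (h : p.natDegree ≤ q.natDegree) : (derivative p).degree < q.degree := by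
  by_cases hp' : derivative p = 0
  · rw [hp', degree_zero]
    exact bot_lt_iff_ne_bot.2 (degree_ne_bot.2 hq)
  exact degree_lt_degree
    ((natDegree_derivative_lt (mt derivative_of_natDegree_zero hp')).trans_le h)

variable [IsDomain A]

lemma degree_logDerivNumerator_lt {ι S : Type*} [Fintype ι] [DecidableEq ι]
    [SMulZeroClass S A] (e : ι → S) {c : ι → A[X]} (hc : ∀ ℓ, c ℓ ≠ 0) :
    (logDerivNumerator e c).degree < (∏ ℓ, c ℓ).degree := by
  have hprod : (∏ ℓ, c ℓ).degree ≠ ⊥ :=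
    degree_ne_bot.2 (prod_ne_zero_iff.2 fun ℓ _ => hc ℓ)
  refine (degree_sum_le _ _).trans_lt ((Finset.sup_lt_iff (bot_lt_iff_ne_bot.2 hprod)).2 ?_)
  intro ℓ _
  have hrest : (∏ j ∈ univ.erase ℓ, c j).degree ≠ ⊥ :=
    degree_ne_bot.2 (prod_ne_zero_iff.2 fun j _ => hc j)
  rw [← Finset.mul_prod_erase univ c (mem_univ ℓ), degree_mul]
  refine (degree_smul_le _ _).trans_lt ?_
  rw [degree_mul]
  exact WithBot.add_lt_add_right hrest (degree_derivative_lt (hc ℓ))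

lemma degree_derivative_mul_lt_degree_mul {p q r : A[X]} (hp : p ≠ 0) (hr : r ≠ 0)
    (hqr : q.natDegree ≤ r.natDegree) : (derivative p * q).degree < (p * r).degree := by
  by_cases hp' : derivative p = 0
  · rw [hp', zero_mul, degree_zero]
    exact bot_lt_iff_ne_bot.2 (degree_ne_bot.2 (mul_ne_zero hp hr))
  have hlt := natDegree_derivative_lt (mt derivative_of_natDegree_zero hp')
  refine degree_lt_degree (natDegree_mul_le.trans_lt ?_)
  rw [natDegree_mul hp hr]
  omega

lemma natDegree_leadingCoeff_derivNumerator {c₀ M T : A[X]} (hc₀ : c₀ ≠ 0) (hT : T ≠ 0)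
    (hMT : M.natDegree ≤ T.natDegree) (i : ℕ) :
    (derivNumerator c₀ M T i).natDegree = c₀.natDegree + i * T.natDegree ∧
      (derivNumerator c₀ M T i).leadingCoeff = c₀.leadingCoeff * T.leadingCoeff ^ i := by
  induction i with
  | zero => simp [derivNumerator]
  | succ i ih =>
    set N := derivNumerator c₀ M T i
    have hN : N ≠ 0 := leadingCoeff_ne_zero.1 (by
      rw [ih.2]
      exact mul_ne_zero (leadingCoeff_ne_zero.2 hc₀) (pow_ne_zero _ (leadingCoeff_ne_zero.2 hT)))
    have hM' : (i • derivative M).degree < T.degree := by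
      refine (degree_smul_le _ _).trans_lt ?_
      exact degree_derivative_lt_of_natDegree_le hT hMT
    have hR : (T - i • derivative M).degree = T.degree := degree_sub_eq_left_of_degree_lt hM'
    have hRlc : (T - i • derivative M).leadingCoeff = T.leadingCoeff :=
      leadingCoeff_sub_of_degree_lt hM'
    have hR0 : T - i • derivative M ≠ 0 := by
      rw [← degree_ne_bot, hR, degree_ne_bot]; exact hT
    have hRdeg : (T - i • derivative M).natDegree = T.natDegree := natDegree_eq_of_degree_eq hR
    have hlt := degree_derivative_mul_lt_degree_mul hN hR0 (hMT.trans_eq hRdeg.symm)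
    simp only [derivNumerator]
    rw [natDegree_add_eq_right_of_degree_lt hlt, leadingCoeff_add_of_degree_lt hlt,
      natDegree_mul hN hR0, leadingCoeff_mul, hRdeg, hRlc, ih.1, ih.2]
    constructor <;> ring

variable [CharZero A]

lemma natDegree_leadingCoeff_derivative_mul_sub {a b : A[X]} (hb : b ≠ 0)
    (hab : b.natDegree < a.natDegree) :
    (derivative a * b - a * derivative b).natDegree = a.natDegree - 1 + b.natDegree ∧
      (derivative a * b - a * derivative b).leadingCoeff =
        ((a.natDegree - b.natDegree : ℤ) : A) * (a.leadingCoeff * b.leadingCoeff) := by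
  obtain ⟨n, hn⟩ : ∃ n, n = a.natDegree - 1 + b.natDegree := ⟨_, rfl⟩
  have hle : (derivative a * b - a * derivative b).natDegree ≤ n := by
    have := natDegree_derivative_le a
    have := natDegree_derivative_le b
    refine (natDegree_sub_le _ _).trans (max_le (natDegree_mul_le.trans (by omega)) ?_)
    rcases Nat.eq_zero_or_pos b.natDegree with hb0 | hb0
    · simp [derivative_of_natDegree_zero hb0]
    · exact natDegree_mul_le.trans (by omega)
  have h1 : (derivative a * b).coeff n = a.leadingCoeff * a.natDegree * b.leadingCoeff := by
    rw [hn, coeff_mul_add_eq_of_natDegree_le (natDegree_derivative_le a) le_rfl,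
      coeff_derivative_natDegree_sub_one, coeff_natDegree]
  have h2 : (a * derivative b).coeff n = a.leadingCoeff * (b.leadingCoeff * b.natDegree) := by
    rcases Nat.eq_zero_or_pos b.natDegree with hb | hb
    · simp [derivative_of_natDegree_zero hb, hb]
    · rw [hn, show a.natDegree - 1 + b.natDegree = a.natDegree + (b.natDegree - 1) by omega,
        coeff_mul_add_eq_of_natDegree_le le_rfl (natDegree_derivative_le b),
        coeff_derivative_natDegree_sub_one, coeff_natDegree]
  have hcoeff : (derivative a * b - a * derivative b).coeff n =
      ((a.natDegree - b.natDegree : ℤ) : A) * (a.leadingCoeff * b.leadingCoeff) := by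
    rw [coeff_sub, h1, h2]
    push_cast
    ring
  have hne : (derivative a * b - a * derivative b).coeff n ≠ 0 := by
    have ha : a ≠ 0 := ne_zero_of_natDegree_gt hab
    rw [hcoeff]
    refine mul_ne_zero ?_ (mul_ne_zero (leadingCoeff_ne_zero.2 ha) (leadingCoeff_ne_zero.2 hb))
    exact Int.cast_ne_zero.2 (by omega)
  have hdeg := natDegree_eq_of_le_of_coeff_ne_zero hle hne
  exact ⟨hdeg.trans hn, by rw [leadingCoeff, hdeg, hcoeff]⟩

lemma natDegree_leadingCoeff_of_mul_eq {a b bs P S T : A[X]} (hb : b ≠ 0)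
    (hbs : bs ≠ 0) (hP : P ≠ 0) (hab : b.natDegree < a.natDegree) (hS : S.degree < P.degree)
    (hT : b * T = (derivative a * b - a * derivative b) * bs * P + b ^ 2 * bs * S) :
    T ≠ 0 ∧ T.natDegree = a.natDegree - 1 + bs.natDegree + P.natDegree ∧
      T.leadingCoeff = ((a.natDegree - b.natDegree : ℤ) : A) * (a * bs * P).leadingCoeff := by
  obtain ⟨hWdeg, hWlc⟩ := natDegree_leadingCoeff_derivative_mul_sub hb hab
  set W := derivative a * b - a * derivative b
  have ha : a ≠ 0 := ne_zero_of_natDegree_gt hab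
  have hlcW : W.leadingCoeff ≠ 0 := by
    rw [hWlc]
    refine mul_ne_zero (Int.cast_ne_zero.2 (by omega)) ?_
    exact mul_ne_zero (leadingCoeff_ne_zero.2 ha) (leadingCoeff_ne_zero.2 hb)
  have hW : W ≠ 0 := leadingCoeff_ne_zero.1 hlcW
  have hb2 : b ^ 2 * bs ≠ 0 := mul_ne_zero (pow_ne_zero 2 hb) hbs
  have hlt : (b ^ 2 * bs * S).degree < (W * bs * P).degree := by
    rw [degree_mul, degree_mul (p := W * bs)]
    calc (b ^ 2 * bs).degree + S.degree < (b ^ 2 * bs).degree + P.degree :=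
          WithBot.add_lt_add_left (degree_ne_bot.2 hb2) hS
      _ ≤ (W * bs).degree + P.degree := by
          gcongr
          rw [degree_eq_natDegree (mul_ne_zero hW hbs)]
          refine degree_le_of_natDegree_le ?_
          rw [natDegree_mul (pow_ne_zero 2 hb) hbs, natDegree_mul hW hbs, natDegree_pow]
          omega
  have hdeg := natDegree_add_eq_left_of_degree_lt hlt
  have hlc := leadingCoeff_add_of_degree_lt' hlt
  rw [← hT] at hdeg hlc
  have hT0 : T ≠ 0 := by
    rintro rfl
    simp [leadingCoeff_mul, hlcW, hbs, hP] at hlc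
  refine ⟨hT0, ?_, ?_⟩
  · rw [natDegree_mul hb hT0, natDegree_mul (mul_ne_zero hW hbs) hP, natDegree_mul hW hbs,
      hWdeg] at hdeg
    omega
  · refine mul_left_cancel₀ (leadingCoeff_ne_zero.2 hb) ?_
    simp only [leadingCoeff_mul] at hlc ⊢
    rw [hlc, hWlc]
    ring

end Degree

section DegY

variable {R : Type*} [CommRing R]

open Polynomial.Bivariate

lemma coeff_coeff_swap (p : R[X][X]) (n k : ℕ) :
    ((swap p).coeff k).coeff n = (p.coeff n).coeff k := by
  induction p using Polynomial.induction_on' with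
  | add p q hp hq => simp only [map_add, coeff_add, hp, hq]
  | monomial m f =>
    induction f using Polynomial.induction_on' with
    | add f g hf hg => simp only [map_add, coeff_add, hf, hg]
    | monomial j r =>
      rw [swap_monomial_monomial]
      simp only [coeff_monomial]
      split_ifs <;> simp_all [coeff_monomial]

lemma natDegree_coeff_le_degY (p : R[X][X]) (n : ℕ) : (p.coeff n).natDegree ≤ degY p := by
  by_cases hn : p.coeff n = 0
  · simp [hn]
  · exact Finset.le_sup (f := fun n => (p.coeff n).natDegree) (mem_support_iff.2 hn)

lemma degY_eq_natDegree_swap (p : R[X][X]) : degY p = (swap p).natDegree := by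
  refine le_antisymm (Finset.sup_le fun n _ => natDegree_le_iff_coeff_eq_zero.2 fun k hk => ?_)
    (natDegree_le_iff_coeff_eq_zero.2 fun k hk => ext fun n => ?_)
  · rw [← coeff_coeff_swap, coeff_eq_zero_of_natDegree_lt hk, coeff_zero]
  · rw [coeff_coeff_swap, coeff_zero,
      coeff_eq_zero_of_natDegree_lt ((natDegree_coeff_le_degY p n).trans_lt hk)]

lemma degY_mul_le (p q : R[X][X]) : degY (p * q) ≤ degY p + degY q := by
  simpa only [degY_eq_natDegree_swap, map_mul] using natDegree_mul_le

lemma degY_add_le (p q : R[X][X]) : degY (p + q) ≤ max (degY p) (degY q) := by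
  simpa only [degY_eq_natDegree_swap, map_add] using natDegree_add_le _ _

lemma degY_sub_le (p q : R[X][X]) : degY (p - q) ≤ max (degY p) (degY q) := by
  simpa only [degY_eq_natDegree_swap, map_sub] using natDegree_sub_le _ _

lemma degY_smul_le (r : R) (p : R[X][X]) : degY (r • p) ≤ degY p := by
  simpa only [degY_eq_natDegree_swap, map_smul] using natDegree_smul_le _ _

lemma degY_nsmul_le (n : ℕ) (p : R[X][X]) : degY (n • p) ≤ degY p := by
  simpa only [degY_eq_natDegree_swap, map_nsmul] using natDegree_smul_le _ _

lemma degY_prod_le {ι : Type*} (s : Finset ι) (f : ι → R[X][X]) :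
    degY (∏ i ∈ s, f i) ≤ ∑ i ∈ s, degY (f i) := by
  simpa only [degY_eq_natDegree_swap, map_prod] using natDegree_prod_le s _

lemma degY_sum_le_of_forall_le {ι : Type*} (s : Finset ι) (f : ι → R[X][X]) {n : ℕ}
    (h : ∀ i ∈ s, degY (f i) ≤ n) : degY (∑ i ∈ s, f i) ≤ n := by
  simp only [degY_eq_natDegree_swap, map_sum] at h ⊢
  exact natDegree_sum_le_of_forall_le s _ h

lemma degY_mul [IsDomain R] {p q : R[X][X]} (hp : p ≠ 0) (hq : q ≠ 0) :
    degY (p * q) = degY p + degY q := by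
  simp only [degY_eq_natDegree_swap, map_mul]
  exact natDegree_mul (by simpa using hp) (by simpa using hq)

lemma degY_derivative_le (p : R[X][X]) : degY (derivative p) ≤ degY p := by
  refine Finset.sup_le fun k _ => ?_
  rw [coeff_derivative, ← Nat.cast_succ, ← nsmul_eq_mul']
  exact (natDegree_smul_le _ _).trans (natDegree_coeff_le_degY p _)

lemma degY_logDerivNumerator_le {ι : Type*} [Fintype ι] [DecidableEq ι] (e : ι → R)
    (c : ι → R[X][X]) : degY (logDerivNumerator e c) ≤ ∑ ℓ, degY (c ℓ) := by
  refine degY_sum_le_of_forall_le _ _ fun ℓ _ => (degY_smul_le _ _).trans ?_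
  rw [← Finset.add_sum_erase univ (fun j => degY (c j)) (mem_univ ℓ)]
  exact (degY_mul_le _ _).trans (add_le_add (degY_derivative_le _) (degY_prod_le _ _))

lemma degY_le_of_mul_eq [IsDomain R] {a b bs P S T : R[X][X]} {n : ℕ} (hb : b ≠ 0)
    (hP : degY P ≤ n) (hS : degY S ≤ n)
    (hT : b * T = (derivative a * b - a * derivative b) * bs * P + b ^ 2 * bs * S) :
    degY T ≤ max (degY a) (degY b) + degY bs + n := by
  rcases eq_or_ne T 0 with rfl | hT0
  · simp [degY]
  have hW : degY (derivative a * b - a * derivative b) ≤ degY a + degY b :=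
    (degY_sub_le _ _).trans (max_le
      ((degY_mul_le _ _).trans (add_le_add (degY_derivative_le a) le_rfl))
      ((degY_mul_le _ _).trans (add_le_add le_rfl (degY_derivative_le b))))
  have hsum := degY_add_le ((derivative a * b - a * derivative b) * bs * P) (b ^ 2 * bs * S)
  have h1 := degY_mul_le ((derivative a * b - a * derivative b) * bs) P
  have h2 := degY_mul_le (derivative a * b - a * derivative b) bs
  have h3 := degY_mul_le (b ^ 2 * bs) S
  have h4 := degY_mul_le (b ^ 2) bs
  have h5 := degY_mul_le b b
  rw [← hT, degY_mul hb hT0] at hsum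
  rw [← sq] at h5
  omega

lemma degY_derivNumerator_le {c₀ M T : R[X][X]} {d : ℕ} (hM : degY M ≤ d) (hT : degY T ≤ d)
    (i : ℕ) : degY (derivNumerator c₀ M T i) ≤ degY c₀ + i * d := by
  induction i with
  | zero => simp [derivNumerator]
  | succ i ih =>
    set N := derivNumerator c₀ M T i
    have h1 := (degY_mul_le (derivative N) M).trans (add_le_add (degY_derivative_le N) hM)
    have h2 : degY (T - i • derivative M) ≤ d :=
      (degY_sub_le _ _).trans (max_le hT ((degY_nsmul_le _ _).trans
        ((degY_derivative_le M).trans hM)))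
    have h3 := (degY_mul_le N (T - i • derivative M)).trans (add_le_add le_rfl h2)
    have h4 := (degY_add_le (derivative N * M) (N * (T - i • derivative M))).trans (max_le h1 h3)
    show degY (derivative N * M + N * (T - i • derivative M)) ≤ degY c₀ + (i + 1) * d
    rw [add_mul, one_mul]
    omega

end DegY

section Differential

variable {A E : Type*} [CommRing A] [CommRing E] [IsDomain E]

lemma derivative_mul_pow_mul (c M : A[X]) (i : ℕ) :
    derivative (c * M ^ i) * M = M ^ i * (derivative c * M + i • (c * derivative M)) := by
  cases i with
  | zero => simp
  | succ i =>
    simp only [derivative_mul, derivative_pow_succ, nsmul_eq_mul, map_add, map_natCast, map_one,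
      Nat.cast_succ]
    ring

lemma iterate_mul_eq_derivNumerator (D : E → E) (ι : A[X] →+* E)
    (hDmul : ∀ u v, D (u * v) = D u * v + u * D v) (hDι : ∀ q, D (ι q) = ι (derivative q))
    {c₀ M T : A[X]} (hc₀ : ι c₀ ≠ 0) {h : E}
    (hh : D h * ι (c₀ * M) = ι (derivative c₀ * M + c₀ * T) * h) (i : ℕ) :
    D^[i] h * ι (c₀ * M ^ i) = ι (derivNumerator c₀ M T i) * h := by
  induction i with
  | zero => simp [derivNumerator, mul_comm]
  | succ i ih =>
    have hD := congrArg D ih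
    rw [hDmul, hDmul, hDι, hDι, ← Function.iterate_succ_apply' D] at hD
    have hpow := congrArg ι (derivative_mul_pow_mul c₀ M i)
    refine mul_left_cancel₀ hc₀ ?_
    simp only [derivNumerator, map_mul, map_add, map_sub, map_nsmul, map_pow] at hD hh hpow ih ⊢
    linear_combination (ι c₀ * ι M) * hD + ι (derivNumerator c₀ M T i) * hh
      - ι c₀ * D^[i] h * hpow
      - (ι (derivative c₀) * ι M + i • (ι c₀ * ι (derivative M))) * ih

end Differential

theorem lemma7_part1_general
    {K : Type*} {E : Type*} [Field K] [CharZero K] [Field E]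
    (Dx : E → E)
    (hDxmul : ∀ u v : E, Dx (u * v) = Dx u * v + u * Dx v)
    (ι : Polynomial (Polynomial K) →+* E)
    (hinj : Function.Injective ι)
    (hDxι : ∀ q : Polynomial (Polynomial K), Dx (ι q) = ι (Polynomial.derivative q))
    (L : ℕ) (a b c0 bs : Polynomial (Polynomial K))
    (c : Fin L → Polynomial (Polynomial K)) (e : Fin L → K)
    (hb : b ≠ 0) (hc0 : c0 ≠ 0) (hc : ∀ ℓ, c ℓ ≠ 0)
    (hbs : Squarefree bs)
    (hbsb : ∀ q : Polynomial (Polynomial K), Prime q → (q ∣ bs ↔ q ∣ b))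
    (h : E)
    (hDxh : Dx h * ι (c0 * b ^ 2 * (∏ ℓ, c ℓ))
      = h * ι (Polynomial.derivative c0 * b ^ 2 * (∏ ℓ, c ℓ)
          + (Polynomial.derivative a * b - a * Polynomial.derivative b) * c0 * (∏ ℓ, c ℓ)
          + c0 * b ^ 2 * ∑ ℓ, e ℓ • (Polynomial.derivative (c ℓ) * ∏ j ∈ Finset.univ.erase ℓ, c j)))
    (hdeg : b.natDegree < a.natDegree) (i : ℕ) :
    ∃ N : Polynomial (Polynomial K),
      (Dx^[i] h) * ι (c0 * (b * bs * ∏ ℓ, c ℓ) ^ (i)) = ι N * h ∧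
      (N.natDegree : ℤ)
        = (c0.natDegree : ℤ)
          + (i : ℤ) * ((a.natDegree : ℤ) + (bs.natDegree : ℤ)
              + (∑ ℓ, ((c ℓ).natDegree : ℤ)) - 1) ∧
      degY N ≤ degY c0
          + i * (max (degY a) (degY b) + degY bs + ∑ ℓ, degY (c ℓ)) ∧
      N.leadingCoeff
        = Polynomial.C ((((a.natDegree : ℤ) - (b.natDegree : ℤ) : ℤ) : K) ^ i)
          * (c0.leadingCoeff * (a * bs * ∏ ℓ, c ℓ).leadingCoeff ^ i) := by
  set P := ∏ ℓ, c ℓ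
  set S := ∑ ℓ, e ℓ • (derivative (c ℓ) * ∏ j ∈ univ.erase ℓ, c j)
  have hP : P ≠ 0 := prod_ne_zero_iff.2 fun ℓ _ => hc ℓ
  obtain ⟨t, ht⟩ := dvd_derivative_mul_of_forall_prime_dvd (b := b) fun q hq => (hbsb q hq).2
  set T := derivative a * bs * P - a * t * P + b * bs * S
  have hbT : b * T = (derivative a * b - a * derivative b) * bs * P + b ^ 2 * bs * S := by
    linear_combination (a * P) * ht
  have hDxh' : Dx h * ι (c0 * (b * bs * P)) = ι (derivative c0 * (b * bs * P) + c0 * T) * h := by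
    refine mul_left_cancel₀ ((map_ne_zero_iff ι hinj).2 hb) ?_
    have hbT' := congrArg ι hbT
    simp only [map_mul, map_add, map_sub, map_pow] at hDxh hbT' ⊢
    linear_combination ι bs * hDxh - ι c0 * h * hbT'
  obtain ⟨hT0, hTdeg, hTlc⟩ := natDegree_leadingCoeff_of_mul_eq hb hbs.ne_zero hP hdeg
    (degree_logDerivNumerator_lt e hc) hbT
  have hMT : (b * bs * P).natDegree ≤ T.natDegree := by
    have := natDegree_mul_le (p := b * bs) (q := P)
    have := natDegree_mul_le (p := b) (q := bs)
    omega
  obtain ⟨hNdeg, hNlc⟩ := natDegree_leadingCoeff_derivNumerator hc0 hT0 hMT i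
  refine ⟨derivNumerator c0 (b * bs * P) T i, iterate_mul_eq_derivNumerator Dx ι hDxmul hDxι
    ((map_ne_zero_iff ι hinj).2 hc0) hDxh' i, ?_, degY_derivNumerator_le ?_ ?_ i, ?_⟩
  · rw [hNdeg, hTdeg, natDegree_prod _ _ fun ℓ _ => hc ℓ]
    push_cast [Nat.cast_sub (Nat.one_le_of_lt hdeg)]
    ring
  · exact (degY_mul_le _ _).trans (add_le_add ((degY_mul_le _ _).trans
      (add_le_add (le_max_right _ _) le_rfl)) (degY_prod_le _ _))
  · exact degY_le_of_mul_eq hb (degY_prod_le _ _) (degY_logDerivNumerator_le e c) hbT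
  · rw [hNlc, hTlc, map_pow, map_intCast]
    ring

theorem lemma7_part1
    {K : Type*} {E : Type*} [Field K] [CharZero K] [Field E]
    (Dx Dy : E → E)
    (hDxadd : ∀ u v : E, Dx (u + v) = Dx u + Dx v)
    (hDxmul : ∀ u v : E, Dx (u * v) = Dx u * v + u * Dx v)
    (hDyadd : ∀ u v : E, Dy (u + v) = Dy u + Dy v)
    (hDymul : ∀ u v : E, Dy (u * v) = Dy u * v + u * Dy v)
    (hcomm : ∀ u : E, Dx (Dy u) = Dy (Dx u))
    (ι : Polynomial (Polynomial K) →+* E)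
    (hinj : Function.Injective ι)
    (hDxι : ∀ q : Polynomial (Polynomial K), Dx (ι q) = ι (Polynomial.derivative q))
    (hDyι : ∀ q : Polynomial (Polynomial K), Dy (ι q) = ι (DY q))
    (L : ℕ) (a b c0 bs : Polynomial (Polynomial K))
    (c : Fin L → Polynomial (Polynomial K)) (e : Fin L → K)
    (ha : a ≠ 0) (hb : b ≠ 0) (hc0 : c0 ≠ 0) (hc : ∀ ℓ, c ℓ ≠ 0)
    (hbs : Squarefree bs)
    (hbsb : ∀ q : Polynomial (Polynomial K), Prime q → (q ∣ bs ↔ q ∣ b))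
    (h : E) (hh : h ≠ 0)
    (hDxh : Dx h * ι (c0 * b ^ 2 * (∏ ℓ, c ℓ))
      = h * ι (Polynomial.derivative c0 * b ^ 2 * (∏ ℓ, c ℓ)
          + (Polynomial.derivative a * b - a * Polynomial.derivative b) * c0 * (∏ ℓ, c ℓ)
          + c0 * b ^ 2 * ∑ ℓ, e ℓ • (Polynomial.derivative (c ℓ) * ∏ j ∈ Finset.univ.erase ℓ, c j)))
    (hDyh : Dy h * ι (c0 * b ^ 2 * (∏ ℓ, c ℓ))
      = h * ι (DY c0 * b ^ 2 * (∏ ℓ, c ℓ)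
          + (DY a * b - a * DY b) * c0 * (∏ ℓ, c ℓ)
          + c0 * b ^ 2 * ∑ ℓ, e ℓ • (DY (c ℓ) * ∏ j ∈ Finset.univ.erase ℓ, c j)))
    (hdeg : b.natDegree < a.natDegree) (i : ℕ) :
    ∃ N : Polynomial (Polynomial K),
      (Dx^[i] h) * ι (c0 * (b * bs * ∏ ℓ, c ℓ) ^ (i)) = ι N * h ∧
      (N.natDegree : ℤ)
        = (c0.natDegree : ℤ)
          + (i : ℤ) * ((a.natDegree : ℤ) + (bs.natDegree : ℤ)
              + (∑ ℓ, ((c ℓ).natDegree : ℤ)) - 1) ∧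
      degY N ≤ degY c0
          + i * (max (degY a) (degY b) + degY bs + ∑ ℓ, degY (c ℓ)) ∧
      N.leadingCoeff
        = Polynomial.C ((((a.natDegree : ℤ) - (b.natDegree : ℤ) : ℤ) : K) ^ i)
          * (c0.leadingCoeff * (a * bs * ∏ ℓ, c ℓ).leadingCoeff ^ i) :=
  lemma7_part1_general Dx hDxmul ι hinj hDxι L a b c0 bs c e hb hc0 hc hbs hbsb h hDxh hdeg i
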